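/- Let (X,𝔅,μ,T) be a measure-preserving system and α a finite measurable partition of X. If α admits at least one positive entropy sequence, then the supremum of the upper dimensions D̄(S) over all positive entropy sequences S of α equals 1 (i.e. D̄^p_μ(T,α) = 1); if α admits no positive entropy sequence then D̄^p_μ(T,α) = 0. Consequently D̄^p_μ(X,T) := sup_α D̄^p_μ(T,α) takes only the values 0 or 1, and D̄^p_μ(X,T) = 0 if and only if the system is null. -/

import Mathlib

open MeasureTheory Filter Set
open scoped ENNReal symmDiff

noncomputable section

namespace EntDim

/-- An increasing sequence of positive integers `S = {s 0 < s 1 < ⋯}` (0-indexed,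
so `s n` is the `(n+1)`-st element of `S`). -/
def IsPosSeq (s : ℕ → ℕ) : Prop := StrictMono s ∧ 0 < s 0

/-- `D̄(S,τ) = limsup_n n / (s_n)^τ` (with the convention that the `n`-th term,
for `n` starting at `0`, is `(n+1)/(s n)^τ`, matching the 1-indexed definition). -/
def dimExprSup (s : ℕ → ℕ) (τ : ℝ) : ℝ≥0∞ :=
  Filter.atTop.limsup fun n : ℕ => ((n : ℝ≥0∞) + 1) / (s n : ℝ≥0∞) ^ τ

/-- `D̲(S,τ) = liminf_n n / (s_n)^τ`. -/
def dimExprInf (s : ℕ → ℕ) (τ : ℝ) : ℝ≥0∞ :=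
  Filter.atTop.liminf fun n : ℕ => ((n : ℝ≥0∞) + 1) / (s n : ℝ≥0∞) ^ τ

/-- The upper dimension `D̄(S) = inf {τ ≥ 0 | D̄(S,τ) = 0}` of a sequence. -/
def upperDim (s : ℕ → ℕ) : ℝ := sInf {τ : ℝ | 0 ≤ τ ∧ dimExprSup s τ = 0}

/-- The lower dimension `D̲(S) = inf {τ ≥ 0 | D̲(S,τ) = 0}` of a sequence. -/
def lowerDim (s : ℕ → ℕ) : ℝ := sInf {τ : ℝ | 0 ≤ τ ∧ dimExprInf s τ = 0}

variable {X : Type*} [MeasurableSpace X]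

/-- `P : ι → Set X` is a finite measurable partition of `X`. -/
def IsPartition {ι : Type*} [Fintype ι] (P : ι → Set X) : Prop :=
  (∀ i, MeasurableSet (P i)) ∧ Pairwise (Function.onFun Disjoint P) ∧ (⋃ i, P i) = Set.univ

/-- The entropy `H_μ(⋁_{i ∈ F} T^{-f i} P)` of the join of the preimage partitions
`T^{-f i} P` over a finite index set `F`. -/
def finJoinEnt (μ : Measure X) (T : X → X) {ι : Type*} [Fintype ι] (P : ι → Set X)
    (f : ℕ → ℕ) (F : Finset ℕ) : ℝ :=
  ∑ ω : F → ι, Real.negMulLog (μ (⋂ i : F, T^[f i.1] ⁻¹' (P (ω i)))).toReal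

/-- `H_μ(⋁_{i=1}^{n} T^{-s_i} P)` (with `s` 0-indexed: this is the join over the
first `n` elements of the sequence). -/
def seqJoinEnt (μ : Measure X) (T : X → X) {ι : Type*} [Fintype ι] (P : ι → Set X)
    (s : ℕ → ℕ) (n : ℕ) : ℝ :=
  finJoinEnt μ T P s (Finset.range n)

/-- `S` is an entropy generating sequence of the partition `P`:
`liminf_n (1/n) H_μ(⋁_{i=1}^n T^{-s_i} P) > 0`. -/
def IsEntGenSeq (μ : Measure X) (T : X → X) {ι : Type*} [Fintype ι] (P : ι → Set X)
    (s : ℕ → ℕ) : Prop :=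
  IsPosSeq s ∧ 0 < Filter.atTop.liminf fun n : ℕ => seqJoinEnt μ T P s n / n

/-- `S` is a positive entropy sequence of the partition `P`:
`limsup_n (1/n) H_μ(⋁_{i=1}^n T^{-s_i} P) > 0`. -/
def IsPosEntSeq (μ : Measure X) (T : X → X) {ι : Type*} [Fintype ι] (P : ι → Set X)
    (s : ℕ → ℕ) : Prop :=
  IsPosSeq s ∧ 0 < Filter.atTop.limsup fun n : ℕ => seqJoinEnt μ T P s n / n

/-- `D̄^e_μ(T,P)`: the supremum of upper dimensions over entropy generating sequences
of `P` (`0`, by convention `sSup ∅ = 0`, if there are none). This is the upper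
entropy dimension `D̄_μ(T,P)` of the partition `P`. -/
def upperEntDimPart (μ : Measure X) (T : X → X) {ι : Type*} [Fintype ι]
    (P : ι → Set X) : ℝ :=
  sSup {d : ℝ | ∃ s : ℕ → ℕ, IsEntGenSeq μ T P s ∧ d = upperDim s}

/-- `D̲^e_μ(T,P)`: the supremum of lower dimensions over entropy generating sequences,
i.e. the lower entropy dimension `D̲_μ(T,P)` of the partition `P`. -/
def lowerEntDimPart (μ : Measure X) (T : X → X) {ι : Type*} [Fintype ι]
    (P : ι → Set X) : ℝ :=
  sSup {d : ℝ | ∃ s : ℕ → ℕ, IsEntGenSeq μ T P s ∧ d = lowerDim s}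

/-- `D̄^p_μ(T,P)`: the supremum of upper dimensions over positive entropy sequences of `P`. -/
def upperPosDimPart (μ : Measure X) (T : X → X) {ι : Type*} [Fintype ι]
    (P : ι → Set X) : ℝ :=
  sSup {d : ℝ | ∃ s : ℕ → ℕ, IsPosEntSeq μ T P s ∧ d = upperDim s}

/-- `D̲^p_μ(T,P)`: the supremum of lower dimensions over positive entropy sequences of `P`. -/
def lowerPosDimPart (μ : Measure X) (T : X → X) {ι : Type*} [Fintype ι]
    (P : ι → Set X) : ℝ :=
  sSup {d : ℝ | ∃ s : ℕ → ℕ, IsPosEntSeq μ T P s ∧ d = lowerDim s}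

/-- The upper metric entropy dimension `D̄_μ(X,T)`: the supremum of `D̄_μ(T,P)`
over all finite measurable partitions `P` of `X`. -/
def upperEntDim (μ : Measure X) (T : X → X) : ℝ :=
  sSup {d : ℝ | ∃ (k : ℕ) (P : Fin k → Set X), IsPartition P ∧ d = upperEntDimPart μ T P}

/-- The lower metric entropy dimension `D̲_μ(X,T)`. -/
def lowerEntDim (μ : Measure X) (T : X → X) : ℝ :=
  sSup {d : ℝ | ∃ (k : ℕ) (P : Fin k → Set X), IsPartition P ∧ d = lowerEntDimPart μ T P}

/-- `D̄^p_μ(X,T)`: the supremum of `D̄^p_μ(T,P)` over all finite measurable partitions. -/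
def upperPosDim (μ : Measure X) (T : X → X) : ℝ :=
  sSup {d : ℝ | ∃ (k : ℕ) (P : Fin k → Set X), IsPartition P ∧ d = upperPosDimPart μ T P}

/-- The two-set partition `{A, X \ A}`. -/
def pairPart (A : Set X) : Fin 2 → Set X := ![A, Aᶜ]

/-- The dimension set `Dims_μ(X,T) = {D̄_μ(T,{A,Aᶜ}) : A ∈ 𝔅, 0 < μ(A) < 1}`. -/
def dimsSet (μ : Measure X) (T : X → X) : Set ℝ :=
  {d : ℝ | ∃ A : Set X, MeasurableSet A ∧ 0 < μ A ∧ μ A < 1 ∧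
    d = upperEntDimPart μ T (pairPart A)}

/-- The system is null: every sequence entropy (along any increasing sequence of
positive integers, for any finite measurable partition) vanishes. -/
def IsNullSystem (μ : Measure X) (T : X → X) : Prop :=
  ∀ (k : ℕ) (P : Fin k → Set X), IsPartition P → ∀ s : ℕ → ℕ, IsPosSeq s →
    Filter.atTop.limsup (fun n : ℕ => seqJoinEnt μ T P s n / n) = 0

end EntDim

/-!
Every strictly increasing sequence `s` of positive integers has `s n ≥ n + 1`, so its upper
dimension is at most `1`. Conversely, let `s` be a positive entropy sequence of `α`, and pick
times `g m ≥ m` with `H(⋁_{i < g m} T^{-s i} α) > c · g m` for a fixed `c > 0`. Interleave `s`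
with blocks `[w, 2w)` of consecutive integers, each block starting right after `s (g (2w'))`,
where `w'` is the start of the previous block. The first `N ≤ 2 g m` terms of the padded
sequence contain `s 0, …, s (g m - 1)`, and refining a join can only increase its entropy, so
the padded sequence still has positive entropy; at the end of each block it takes the value
`2w - 1` at an index `≥ w - 1`, so it grows linearly infinitely often and has upper dimension `1`.
Hence `D̄^p_μ(T,α) ∈ {0, 1}`, with value `1` exactly when `α` has a positive entropy sequence,
and taking the supremum over `α` gives the statement about `D̄^p_μ(X,T)` and nullity.
-/

namespace EntDim

open Real

lemma negMulLog_add_le {a b : ℝ} (ha : 0 ≤ a) (hb : 0 ≤ b) :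
    negMulLog (a + b) ≤ negMulLog a + negMulLog b := by
  rcases ha.eq_or_lt with rfl | ha
  · simp
  rcases hb.eq_or_lt with rfl | hb
  · simp
  have hla := log_le_log ha (le_add_of_nonneg_right hb.le)
  have hlb := log_le_log hb (le_add_of_nonneg_left ha.le)
  simp only [negMulLog]
  nlinarith

lemma negMulLog_sum_le {κ : Type*} (t : Finset κ) {p : κ → ℝ} (hp : ∀ a, 0 ≤ p a) :
    negMulLog (∑ a ∈ t, p a) ≤ ∑ a ∈ t, negMulLog (p a) := by
  classical
  induction t using Finset.induction with
  | empty => simp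
  | insert a t ha ih =>
    rw [Finset.sum_insert ha, Finset.sum_insert ha]
    exact (negMulLog_add_le (hp a) (Finset.sum_nonneg fun i _ => hp i)).trans (by linarith)

lemma sum_negMulLog_le_log_card_add_one {κ : Type*} [Fintype κ] {p : κ → ℝ}
    (hp : ∀ a, 0 ≤ p a) (hp1 : ∑ a, p a ≤ 1) :
    ∑ a, negMulLog (p a) ≤ log (Fintype.card κ) + 1 := by
  rcases isEmpty_or_nonempty κ with hκ | hκ
  · simp
  set N : ℝ := (Fintype.card κ : ℝ)
  have hN : 0 < N := by simp [N, Fintype.card_pos]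
  have hlogN : 0 ≤ log N := log_nonneg (by simp [N, Nat.one_le_iff_ne_zero])
  -- write `p a = (p a * N) * N⁻¹` and use `negMulLog x ≤ 1 - x`
  have key : ∀ a, negMulLog (p a) ≤ N⁻¹ - p a + p a * log N := by
    intro a
    have hsplit := negMulLog_mul (p a * N) N⁻¹
    have hinv : negMulLog N⁻¹ = N⁻¹ * log N := by simp [negMulLog, log_inv]
    rw [mul_inv_cancel_right₀ hN.ne', hinv] at hsplit
    have hle := negMulLog_le_one_sub_self (mul_nonneg (hp a) hN.le)
    have : p a * N * (N⁻¹ * log N) = p a * log N := by field_simp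
    rw [hsplit, this]
    have : N⁻¹ * negMulLog (p a * N) ≤ N⁻¹ * (1 - p a * N) :=
      mul_le_mul_of_nonneg_left hle (inv_nonneg.2 hN.le)
    have : N⁻¹ * (1 - p a * N) = N⁻¹ - p a := by field_simp
    linarith
  calc ∑ a, negMulLog (p a) ≤ ∑ a, (N⁻¹ - p a + p a * log N) := Finset.sum_le_sum fun a _ => key a
    _ = 1 - ∑ a, p a + (∑ a, p a) * log N := by
      rw [Finset.sum_add_distrib, Finset.sum_sub_distrib, Finset.sum_const, Finset.card_univ,
        nsmul_eq_mul, mul_inv_cancel₀ hN.ne', Finset.sum_mul]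
    _ ≤ log N + 1 := by
      nlinarith [Finset.sum_nonneg fun a (_ : a ∈ Finset.univ) => hp a]

lemma IsPosSeq.one_le {s : ℕ → ℕ} (hs : IsPosSeq s) (n : ℕ) : 1 ≤ s n :=
  hs.2.trans_le (hs.1.monotone n.zero_le)

lemma IsPosSeq.succ_le {s : ℕ → ℕ} (hs : IsPosSeq s) (n : ℕ) : n + 1 ≤ s n := by
  induction n with
  | zero => exact hs.one_le 0
  | succ n ih => exact ih.trans_lt (hs.1 n.lt_succ_self)

lemma dimExprSup_eq_zero_of_one_lt {s : ℕ → ℕ} (hs : IsPosSeq s) {τ : ℝ} (hτ : 1 < τ) :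
    dimExprSup s τ = 0 := by
  have hbound : ∀ n : ℕ, ((n : ℝ≥0∞) + 1) / (s n : ℝ≥0∞) ^ τ ≤ ((n : ℝ≥0∞) + 1) ^ (1 - τ) := by
    intro n
    have hsn : (n : ℝ≥0∞) + 1 ≤ s n := by exact_mod_cast hs.succ_le n
    rw [sub_eq_add_neg, ENNReal.rpow_add _ _ (by simp) (by simp), ENNReal.rpow_one,
      ENNReal.rpow_neg, ← div_eq_mul_inv]
    exact ENNReal.div_le_div_left (ENNReal.rpow_le_rpow hsn (by linarith)) _
  have hlim : Tendsto (fun n : ℕ => ((n : ℝ≥0∞) + 1) ^ (1 - τ)) atTop (nhds 0) := by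
    have htop : Tendsto (fun n : ℕ => (n : ℝ≥0∞) + 1) atTop (nhds ⊤) := by
      simpa using ENNReal.tendsto_nat_nhds_top.add_const 1
    have := (ENNReal.continuous_rpow_const (y := 1 - τ)).tendsto ⊤
    rw [ENNReal.top_rpow_of_neg (by linarith)] at this
    exact this.comp htop
  exact (tendsto_of_tendsto_of_tendsto_of_le_of_le tendsto_const_nhds hlim
    (fun _ => zero_le) hbound).limsup_eq

lemma upperDim_le_one {s : ℕ → ℕ} (hs : IsPosSeq s) : upperDim s ≤ 1 :=
  le_of_forall_pos_le_add fun ε hε =>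
    csInf_le ⟨0, fun _ hτ => hτ.1⟩ ⟨by linarith, dimExprSup_eq_zero_of_one_lt hs (by linarith)⟩

lemma upperDim_eq_one_of_frequently_le {s : ℕ → ℕ} (hs : IsPosSeq s) {C : ℕ}
    (hC : ∃ᶠ n in atTop, s n ≤ C * (n + 1)) : upperDim s = 1 := by
  refine (upperDim_le_one hs).antisymm
    (le_csInf ⟨2, by norm_num, dimExprSup_eq_zero_of_one_lt hs one_lt_two⟩ ?_)
  rintro τ ⟨hτ0, hτ⟩
  by_contra! hτ1
  obtain ⟨n₀, hn₀⟩ := hC.exists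
  have hC0 : (C : ℝ≥0∞) ≠ 0 := by
    have := hs.one_le n₀
    exact_mod_cast (show C ≠ 0 by rintro rfl; omega)
  have hfreq : ∃ᶠ n : ℕ in atTop, (C : ℝ≥0∞)⁻¹ ≤ ((n : ℝ≥0∞) + 1) / (s n : ℝ≥0∞) ^ τ := by
    refine hC.mono fun n hn => ?_
    have hs1 : (1 : ℝ≥0∞) ≤ s n := by exact_mod_cast hs.one_le n
    have hpow : (s n : ℝ≥0∞) ^ τ ≤ s n := by
      simpa using ENNReal.rpow_le_rpow_of_exponent_le hs1 hτ1.le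
    have hsn : (s n : ℝ≥0∞) ≤ C * ((n : ℝ≥0∞) + 1) := by exact_mod_cast hn
    rw [ENNReal.le_div_iff_mul_le (Or.inl (ENNReal.rpow_pos (zero_lt_one.trans_le hs1)
      (by simp)).ne') (Or.inl (ENNReal.rpow_ne_top_of_nonneg hτ0 (by simp)))]
    calc (C : ℝ≥0∞)⁻¹ * (s n : ℝ≥0∞) ^ τ ≤ (C : ℝ≥0∞)⁻¹ * (C * ((n : ℝ≥0∞) + 1)) :=
          mul_le_mul_right (hpow.trans hsn) _
      _ = (n : ℝ≥0∞) + 1 := by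
          rw [← mul_assoc, ENNReal.inv_mul_cancel hC0 (by simp), one_mul]
  have hle : (C : ℝ≥0∞)⁻¹ ≤ dimExprSup s τ := le_limsup_of_frequently_le hfreq
  rw [hτ, nonpos_iff_eq_zero, ENNReal.inv_eq_zero] at hle
  simp at hle

section Join

variable {X : Type*} [MeasurableSpace X] {μ : Measure X} {T : X → X}
  {ι : Type*} [Fintype ι] {P : ι → Set X}

lemma IsPartition.exists_mem (hP : IsPartition P) (x : X) : ∃ i, x ∈ P i :=
  Set.iUnion_eq_univ_iff.1 hP.2.2 x

lemma IsPartition.eq_of_mem (hP : IsPartition P) {x : X} {i j : ι} (hi : x ∈ P i)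
    (hj : x ∈ P j) : i = j := by
  by_contra hij
  exact Set.disjoint_left.1 (hP.2.1 hij) hi hj

def joinAtom (T : X → X) (P : ι → Set X) (f : ℕ → ℕ) (F : Finset ℕ) (ω : F → ι) : Set X :=
  ⋂ i : F, T^[f i] ⁻¹' P (ω i)

lemma finJoinEnt_eq_sum_joinAtom (f : ℕ → ℕ) (F : Finset ℕ) :
    finJoinEnt μ T P f F = ∑ ω : F → ι, negMulLog (μ (joinAtom T P f F ω)).toReal :=
  rfl

lemma measurableSet_joinAtom (hT : Measurable T) (hP : IsPartition P) (f : ℕ → ℕ)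
    {F : Finset ℕ} (ω : F → ι) : MeasurableSet (joinAtom T P f F ω) :=
  .iInter fun _ => hT.iterate _ (hP.1 _)

lemma pairwise_disjoint_joinAtom (hP : IsPartition P) (f : ℕ → ℕ) (F : Finset ℕ) :
    Pairwise (Function.onFun Disjoint (joinAtom T P f F)) := by
  intro ω ω' hne
  obtain ⟨i, hi⟩ := Function.ne_iff.1 hne
  exact Set.disjoint_of_subset (Set.iInter_subset _ i) (Set.iInter_subset _ i)
    ((hP.2.1 hi).preimage _)

lemma joinAtom_eq_biUnion [DecidableEq ι] (hP : IsPartition P) {f g : ℕ → ℕ} {F G : Finset ℕ}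
    (φ : F → G) (hφ : ∀ i : F, g i = f (φ i)) (ω₀ : F → ι) :
    joinAtom T P g F ω₀ = ⋃ ω ∈ Finset.univ.filter (fun ω : G → ι => ω ∘ φ = ω₀),
      joinAtom T P f G ω := by
  ext x
  simp only [joinAtom, Set.mem_iInter, Set.mem_preimage, Set.mem_iUnion, Finset.mem_filter,
    Finset.mem_univ, true_and, exists_prop]
  constructor
  · intro hx
    choose ω hω using fun j : G => hP.exists_mem (T^[f j] x)
    refine ⟨ω, funext fun i => hP.eq_of_mem (hω (φ i)) ?_, hω⟩
    rw [← hφ]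
    exact hx i
  · rintro ⟨ω, rfl, hx⟩ i
    rw [hφ]
    exact hx (φ i)

lemma finJoinEnt_le_of_forall_exists [IsFiniteMeasure μ] (hT : Measurable T)
    (hP : IsPartition P) {f g : ℕ → ℕ} {F G : Finset ℕ} (h : ∀ i ∈ F, ∃ j ∈ G, g i = f j) :
    finJoinEnt μ T P g F ≤ finJoinEnt μ T P f G := by
  classical
  choose φ hφG hφ using h
  let φ' : F → G := fun i => ⟨φ i i.2, hφG i i.2⟩
  have hfiber : ∀ ω₀ : F → ι, (μ (joinAtom T P g F ω₀)).toReal =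
      ∑ ω ∈ Finset.univ.filter (fun ω : G → ι => ω ∘ φ' = ω₀), (μ (joinAtom T P f G ω)).toReal := by
    intro ω₀
    rw [joinAtom_eq_biUnion hP φ' (fun i => hφ i i.2), measure_biUnion_finset
      (fun ω _ ω' _ hne => pairwise_disjoint_joinAtom hP f G hne)
      (fun ω _ => measurableSet_joinAtom hT hP f ω),
      ENNReal.toReal_sum fun ω _ => measure_ne_top μ _]
  rw [finJoinEnt_eq_sum_joinAtom, finJoinEnt_eq_sum_joinAtom,
    ← Finset.sum_fiberwise Finset.univ (fun ω : G → ι => ω ∘ φ')]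
  exact Finset.sum_le_sum fun ω₀ _ => (hfiber ω₀).symm ▸
    negMulLog_sum_le _ fun _ => ENNReal.toReal_nonneg

variable [IsProbabilityMeasure μ]

lemma seqJoinEnt_nonneg (s : ℕ → ℕ) (n : ℕ) : 0 ≤ seqJoinEnt μ T P s n :=
  Finset.sum_nonneg fun _ _ => Real.negMulLog_nonneg ENNReal.toReal_nonneg
    (ENNReal.toReal_le_of_le_ofReal zero_le_one (by simpa using prob_le_one))

lemma seqJoinEnt_le (hT : Measurable T) (hP : IsPartition P) (s : ℕ → ℕ) (n : ℕ) :
    seqJoinEnt μ T P s n ≤ n * log (Fintype.card ι) + 1 := by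
  classical
  have hsum : ∑ ω : Finset.range n → ι, (μ (joinAtom T P s (Finset.range n) ω)).toReal ≤ 1 := by
    rw [← ENNReal.toReal_sum fun ω _ => measure_ne_top μ _]
    refine ENNReal.toReal_le_of_le_ofReal zero_le_one ?_
    rw [ENNReal.ofReal_one, ← measure_univ (μ := μ)]
    exact sum_measure_le_measure_univ
      (fun ω _ => (measurableSet_joinAtom hT hP s ω).nullMeasurableSet)
      fun ω _ ω' _ hne => (pairwise_disjoint_joinAtom hP s _ hne).aedisjoint
  have := sum_negMulLog_le_log_card_add_one (fun _ => ENNReal.toReal_nonneg) hsum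
  rwa [Fintype.card_fun, Fintype.card_coe, Finset.card_range, Nat.cast_pow, Real.log_pow] at this

lemma isBoundedUnder_seqJoinEnt_div (hT : Measurable T) (hP : IsPartition P) (s : ℕ → ℕ) :
    IsBoundedUnder (· ≤ ·) atTop fun n : ℕ => seqJoinEnt μ T P s n / n := by
  refine isBoundedUnder_of_eventually_le (a := log (Fintype.card ι) + 1) ?_
  filter_upwards [eventually_ge_atTop 1] with n hn
  have hn : (1 : ℝ) ≤ n := by exact_mod_cast hn
  rw [div_le_iff₀ (by positivity)]
  have hlog : 0 ≤ log (Fintype.card ι) := Real.log_natCast_nonneg _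
  nlinarith [seqJoinEnt_le (μ := μ) hT hP s n]

end Join

section Padding

def blockStart (s g : ℕ → ℕ) : ℕ → ℕ
  | 0 => 1
  | k + 1 => s (g (2 * blockStart s g k)) + 1

def paddedSet (s g : ℕ → ℕ) : Set ℕ :=
  Set.range s ∪ ⋃ k, Set.Ico (blockStart s g k) (2 * blockStart s g k)

def paddedSeq (s g : ℕ → ℕ) : ℕ → ℕ := Nat.nth (· ∈ paddedSet s g)

variable {s g : ℕ → ℕ}

lemma two_mul_blockStart_lt (hs : StrictMono s) (hg : ∀ m, m ≤ g m) (k : ℕ) :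
    2 * blockStart s g k < blockStart s g (k + 1) :=
  Nat.lt_succ_of_le ((hg _).trans hs.le_apply)

lemma lt_blockStart (hs : StrictMono s) (hg : ∀ m, m ≤ g m) (k : ℕ) : k < blockStart s g k := by
  induction k with
  | zero => exact Nat.one_pos
  | succ k ih => have := two_mul_blockStart_lt hs hg k; omega

lemma blockStart_strictMono (hs : StrictMono s) (hg : ∀ m, m ≤ g m) :
    StrictMono (blockStart s g) :=
  strictMono_nat_of_lt_succ fun k => by
    have := two_mul_blockStart_lt hs hg k
    omega

lemma blockStart_pos (k : ℕ) : 0 < blockStart s g k := by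
  cases k <;> simp [blockStart]

lemma pos_of_mem_paddedSet (hs : IsPosSeq s) {x : ℕ} (hx : x ∈ paddedSet s g) : 0 < x := by
  rcases hx with ⟨j, rfl⟩ | hx
  · exact hs.one_le j
  · obtain ⟨k, hk, -⟩ := Set.mem_iUnion.1 hx
    exact blockStart_pos k |>.trans_le hk

lemma mem_range_or_lt_of_mem_paddedSet (hs : StrictMono s) (hg : ∀ m, m ≤ g m) {k x : ℕ}
    (hx : x ∈ paddedSet s g) (hxk : x < blockStart s g (k + 1)) :
    x ∈ Set.range s ∨ x < 2 * blockStart s g k := by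
  rcases hx with hx | hx
  · exact Or.inl hx
  obtain ⟨j, hjx, hxj⟩ := Set.mem_iUnion.1 hx
  have hjk : j ≤ k := by
    by_contra! hkj
    exact (hxk.trans_le (hjx.trans' ((blockStart_strictMono hs hg).monotone hkj))).false
  exact Or.inr (hxj.trans_le (by gcongr; exact (blockStart_strictMono hs hg).monotone hjk))

lemma paddedSet_infinite (hs : StrictMono s) : (paddedSet s g).Infinite :=
  (Set.infinite_range_of_injective hs.injective).mono Set.subset_union_left

lemma isPosSeq_paddedSeq (hs : IsPosSeq s) : IsPosSeq (paddedSeq s g) :=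
  ⟨Nat.nth_strictMono (paddedSet_infinite hs.1),
    pos_of_mem_paddedSet hs (Nat.nth_mem_of_infinite (paddedSet_infinite hs.1) 0)⟩

lemma frequently_paddedSeq_le (hs : StrictMono s) (hg : ∀ m, m ≤ g m) :
    ∃ᶠ N in atTop, paddedSeq s g N ≤ 2 * (N + 1) := by
  classical
  refine frequently_atTop.2 fun K => ?_
  set w := blockStart s g K
  have hKw := lt_blockStart hs hg K
  have hmem : 2 * w - 1 ∈ paddedSet s g :=
    Or.inr (Set.mem_iUnion.2 ⟨K, by simp only [Set.mem_Ico]; omega⟩)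
  have hcount : w - 1 ≤ Nat.count (· ∈ paddedSet s g) (2 * w - 1) := by
    rw [Nat.count_eq_card_filter_range]
    calc w - 1 = (Finset.Ico w (2 * w - 1)).card := by simp; omega
      _ ≤ _ := Finset.card_le_card fun x hx => by
        rw [Finset.mem_Ico] at hx
        exact Finset.mem_filter.2 ⟨Finset.mem_range.2 hx.2,
          Or.inr (Set.mem_iUnion.2 ⟨K, by simp only [Set.mem_Ico]; omega⟩)⟩
  refine ⟨Nat.count (· ∈ paddedSet s g) (2 * w - 1), by omega, ?_⟩
  rw [paddedSeq, Nat.nth_count hmem]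
  omega

lemma exists_paddedSeq_block (hs : StrictMono s) (hg : ∀ m, m ≤ g m) (K : ℕ) :
    ∃ m ≥ K, ∃ N, g m ≤ N ∧ N ≤ 2 * g m ∧ ∀ j < g m, ∃ i < N, paddedSeq s g i = s j := by
  classical
  set m := 2 * blockStart s g K
  set n := g m
  have hK : K ≤ m := by have := lt_blockStart hs hg K; omega
  have hmem : ∀ j, s j ∈ paddedSet s g := fun j => Or.inl ⟨j, rfl⟩
  refine ⟨m, hK, Nat.count (· ∈ paddedSet s g) (s n), ?_, ?_, fun j hj =>
    ⟨_, Nat.count_strict_mono (hmem j) (hs hj), Nat.nth_count (hmem j)⟩⟩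
  · rw [Nat.count_eq_card_filter_range]
    calc n = ((Finset.range n).image s).card := by
          rw [Finset.card_image_of_injective _ hs.injective, Finset.card_range]
      _ ≤ _ := Finset.card_le_card fun x hx => by
        obtain ⟨j, hj, rfl⟩ := Finset.mem_image.1 hx
        exact Finset.mem_filter.2 ⟨Finset.mem_range.2 (hs (Finset.mem_range.1 hj)), hmem j⟩
  · rw [Nat.count_eq_card_filter_range]
    calc _ ≤ ((Finset.range n).image s ∪ Finset.range m).card := by
          refine Finset.card_le_card fun x hx => ?_
          obtain ⟨hxn, hx⟩ := Finset.mem_filter.1 hx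
          have hxn := Finset.mem_range.1 hxn
          rcases mem_range_or_lt_of_mem_paddedSet hs hg hx
              (hxn.trans (Nat.lt_succ_self _)) with ⟨j, rfl⟩ | hxm
          · exact Finset.mem_union_left _
              (Finset.mem_image_of_mem s (Finset.mem_range.2 (hs.lt_iff_lt.1 hxn)))
          · exact Finset.mem_union_right _ (Finset.mem_range.2 hxm)
      _ ≤ n + m := by
          grw [Finset.card_union_le, Finset.card_image_le, Finset.card_range, Finset.card_range]
      _ ≤ 2 * n := by have := hg m; omega

end Padding

section Construction

variable {X : Type*} [MeasurableSpace X] {μ : Measure X} [IsProbabilityMeasure μ] {T : X → X}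
  {ι : Type*} [Fintype ι] {P : ι → Set X}

lemma frequently_le_seqJoinEnt_paddedSeq_div (hT : Measurable T) (hP : IsPartition P)
    {s g : ℕ → ℕ} (hs : StrictMono s) (hg : ∀ m, m ≤ g m) {c : ℝ} (hc : 0 ≤ c)
    (hgc : ∀ m, c < seqJoinEnt μ T P s (g m) / g m) :
    ∃ᶠ N in atTop, c / 2 ≤ seqJoinEnt μ T P (paddedSeq s g) N / N := by
  refine frequently_atTop.2 fun K => ?_
  obtain ⟨m, hKm, N, hnN, hN, hsub⟩ := exists_paddedSeq_block hs hg K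
  have hcn := hgc m
  have hn : (0 : ℝ) < g m := by
    by_contra! h
    rw [le_antisymm h (g m).cast_nonneg, div_zero] at hcn
    linarith
  have hNn : (g m : ℝ) ≤ N := by exact_mod_cast hnN
  have hN2 : (N : ℝ) ≤ 2 * g m := by exact_mod_cast hN
  have hsubH : seqJoinEnt μ T P s (g m) ≤ seqJoinEnt μ T P (paddedSeq s g) N :=
    finJoinEnt_le_of_forall_exists hT hP fun j hj => by
      obtain ⟨i, hi, hij⟩ := hsub j (Finset.mem_range.1 hj)
      exact ⟨i, Finset.mem_range.2 hi, hij.symm⟩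
  refine ⟨N, hKm.trans ((hg m).trans hnN), ?_⟩
  rw [le_div_iff₀ (hn.trans_le hNn)]
  calc c / 2 * N ≤ c * g m := by nlinarith
    _ ≤ seqJoinEnt μ T P s (g m) := ((lt_div_iff₀ hn).1 hcn).le
    _ ≤ _ := hsubH

lemma exists_isPosEntSeq_upperDim_eq_one (hT : Measurable T) (hP : IsPartition P)
    {s : ℕ → ℕ} (hs : IsPosEntSeq μ T P s) : ∃ t, IsPosEntSeq μ T P t ∧ upperDim t = 1 := by
  obtain ⟨hps, hlim⟩ := hs
  obtain ⟨c, hc0, hcL⟩ := exists_between hlim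
  have hfreq : ∃ᶠ n in atTop, c < seqJoinEnt μ T P s n / n :=
    frequently_lt_of_lt_limsup (isCoboundedUnder_le_of_le atTop fun n =>
      div_nonneg (seqJoinEnt_nonneg s n) n.cast_nonneg) hcL
  choose g hg hgc using frequently_atTop.1 hfreq
  have htpos : IsPosSeq (paddedSeq s g) := isPosSeq_paddedSeq hps
  refine ⟨paddedSeq s g, ⟨htpos, ?_⟩,
    upperDim_eq_one_of_frequently_le htpos (frequently_paddedSeq_le hps.1 hg)⟩
  exact lt_of_lt_of_le (by linarith) (le_limsup_of_frequently_le
    (frequently_le_seqJoinEnt_paddedSeq_div hT hP hps.1 hg hc0.le hgc)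
    (isBoundedUnder_seqJoinEnt_div hT hP _))

end Construction

section Dichotomy

variable {X : Type*} [MeasurableSpace X] {μ : Measure X} {T : X → X}

lemma upperPosDimPart_le_one {ι : Type*} [Fintype ι] (P : ι → Set X) :
    upperPosDimPart μ T P ≤ 1 :=
  Real.sSup_le (fun _ ⟨_, hs, hd⟩ => hd ▸ upperDim_le_one hs.1) zero_le_one

lemma upperPosDimPart_eq_one [IsProbabilityMeasure μ] (hT : Measurable T) {ι : Type*}
    [Fintype ι] {P : ι → Set X} (hP : IsPartition P) (h : ∃ s, IsPosEntSeq μ T P s) :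
    upperPosDimPart μ T P = 1 := by
  obtain ⟨s, hs⟩ := h
  obtain ⟨t, ht, htd⟩ := exists_isPosEntSeq_upperDim_eq_one hT hP hs
  exact (upperPosDimPart_le_one P).antisymm
    (le_csSup ⟨1, fun _ ⟨_, hs, hd⟩ => hd ▸ upperDim_le_one hs.1⟩ ⟨t, ht, htd.symm⟩)

lemma upperPosDimPart_eq_zero {ι : Type*} [Fintype ι] {P : ι → Set X}
    (h : ¬ ∃ s, IsPosEntSeq μ T P s) : upperPosDimPart μ T P = 0 := by
  have hempty : {d | ∃ s, IsPosEntSeq μ T P s ∧ d = upperDim s} = ∅ :=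
    Set.eq_empty_of_forall_notMem fun _ ⟨s, hs, _⟩ => h ⟨s, hs⟩
  rw [upperPosDimPart, hempty, Real.sSup_empty]

def HasPosEntSeq (μ : Measure X) (T : X → X) : Prop :=
  ∃ (k : ℕ) (P : Fin k → Set X) (s : ℕ → ℕ), IsPartition P ∧ IsPosEntSeq μ T P s

lemma upperPosDim_eq_one [IsProbabilityMeasure μ] (hT : Measurable T) (h : HasPosEntSeq μ T) :
    upperPosDim μ T = 1 := by
  obtain ⟨k, P, s, hP, hs⟩ := h
  have hle : ∀ d ∈ {d | ∃ (k : ℕ) (P : Fin k → Set X), IsPartition P ∧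
      d = upperPosDimPart μ T P}, d ≤ 1 := fun _ ⟨_, P, _, hd⟩ => hd ▸ upperPosDimPart_le_one P
  exact (Real.sSup_le hle zero_le_one).antisymm
    (le_csSup ⟨1, hle⟩ ⟨k, P, hP, (upperPosDimPart_eq_one hT hP ⟨s, hs⟩).symm⟩)

lemma upperPosDim_eq_zero (h : ¬ HasPosEntSeq μ T) : upperPosDim μ T = 0 := by
  have hzero : ∀ d ∈ {d | ∃ (k : ℕ) (P : Fin k → Set X), IsPartition P ∧
      d = upperPosDimPart μ T P}, d = 0 := fun _ ⟨k, P, hP, hd⟩ =>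
    hd ▸ upperPosDimPart_eq_zero fun ⟨s, hs⟩ => h ⟨k, P, s, hP, hs⟩
  exact (Real.sSup_le (fun d hd => (hzero d hd).le) le_rfl).antisymm
    (Real.sSup_nonneg fun d hd => (hzero d hd).ge)

lemma isNullSystem_iff_not_hasPosEntSeq [IsProbabilityMeasure μ] (hT : Measurable T) :
    IsNullSystem μ T ↔ ¬ HasPosEntSeq μ T := by
  refine ⟨fun h ⟨k, P, s, hP, hs, hpos⟩ => hpos.ne' (h k P hP s hs), fun h k P hP s hs => ?_⟩
  refine le_antisymm (not_lt.1 fun hpos => h ⟨k, P, s, hP, hs, hpos⟩) ?_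
  exact le_limsup_of_frequently_le (Frequently.of_forall fun n =>
    div_nonneg (seqJoinEnt_nonneg s n) n.cast_nonneg) (isBoundedUnder_seqJoinEnt_div hT hP s)

end Dichotomy

/-- `D̄^p_μ(T,α)` equals 1 if `α` has a positive entropy sequence, 0
otherwise; consequently `D̄^p_μ(X,T) ∈ {0,1}`, and it is 0 iff the system is null. -/
theorem upperPosDim_dichotomy {X : Type*} [MeasurableSpace X]
    (μ : Measure X) [IsProbabilityMeasure μ] (T : X → X) (hT : MeasurePreserving T μ μ)
    {k : ℕ} (P : Fin k → Set X) (hP : IsPartition P) :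
    ((∃ s : ℕ → ℕ, IsPosEntSeq μ T P s) → upperPosDimPart μ T P = 1) ∧
    ((¬ ∃ s : ℕ → ℕ, IsPosEntSeq μ T P s) → upperPosDimPart μ T P = 0) ∧
    (upperPosDim μ T = 0 ∨ upperPosDim μ T = 1) ∧
    (upperPosDim μ T = 0 ↔ IsNullSystem μ T) := by
  refine ⟨upperPosDimPart_eq_one hT.measurable hP, upperPosDimPart_eq_zero, ?_⟩
  rw [isNullSystem_iff_not_hasPosEntSeq hT.measurable]
  by_cases h : HasPosEntSeq μ T
  · simp [upperPosDim_eq_one hT.measurable h, h]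
  · simp [upperPosDim_eq_zero h, h]

end EntDim
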